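/- If a package description φ is consistent and (p,n) is installed in φ with Conflicts(φ(p,n)) containing the atom (⊤, p) (a self-conflict without version constraint), then n is the only installed version of p in φ, provided no other installed package provides feature p. -/
import Mathlib


abbrev PkgName := String
abbrev Ver := ℕ+

inductive Relop | eq | ne | lt | gt | le | ge

def Relop.sat : Relop → Ver → Ver → Prop
  | .eq, n, v => n = v
  | .ne, n, v => n ≠ v
  | .lt, n, v => n < v
  | .gt, n, v => n > v
  | .le, n, v => n ≤ v
  | .ge, n, v => n ≥ v

inductive VConstr | top | rel (op : Relop) (v : Ver)

def VConstr.sat : VConstr → Ver → Prop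
  | .top, _ => True
  | .rel op v, n => op.sat n v

/-- A versioned package name: a constraint together with a package name. -/
abbrev Atom := VConstr × PkgName

/-- An installation maps package names to sets of installed versions. -/
abbrev Installation := PkgName → Set Ver

def satAtom (I : Installation) (a : Atom) : Prop := ∃ n ∈ I a.2, a.1.sat n

def satList (I : Installation) (l : List Atom) : Prop := ∀ a ∈ l, satAtom I a

/-- Disjointness I ∥ l. -/
def disj (I : Installation) (l : List Atom) : Prop :=
  ∀ a ∈ l, ∀ n ∈ I a.2, ¬ a.1.sat n

/-- CNF formulae over atoms: conjunction of disjunctions; [] is `true`. -/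
abbrev Fla := List (List Atom)

def satFla (I : Installation) (F : Fla) : Prop := ∀ c ∈ F, ∃ a ∈ c, satAtom I a

def merge (I J : Installation) : Installation := fun p => I p ∪ J p

inductive KeepVal | version | package | feature | none

structure Meta where
  installed : Bool
  keep : KeepVal
  depends : Fla
  conflicts : List Atom
  provides : List Atom
  cost : ℤ := 0

/-- A package description: a partial function from (name, version) pairs to metadata. -/
abbrev Descr := PkgName × Ver → Option Meta

def dom (φ : Descr) : Set (PkgName × Ver) := {x | (φ x).isSome}

/-- Current installation i_φ. -/
def inst (φ : Descr) : Installation :=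
  fun p => {n | ∃ m, φ (p, n) = some m ∧ m.installed = true}

/-- Current features f_φ: expand-features of the Provides lists of installed packages. -/
def feat (φ : Descr) : Installation :=
  fun q => {n | ∃ p v m, φ (p, v) = some m ∧ m.installed = true ∧
                 ∃ a ∈ m.provides, a.2 = q ∧ a.1.sat n}

/-- Package removal φ − (p,n). -/
def remove (φ : Descr) (x : PkgName × Ver) : Descr :=
  fun y => if y = x then none else φ y

def consistent (φ : Descr) : Prop :=
  ∀ p n m, φ (p, n) = some m → m.installed = true →
    satFla (merge (inst φ) (feat φ)) m.depends ∧
    disj (merge (inst (remove φ (p, n))) (feat (remove φ (p, n)))) m.conflicts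

/-- The successor relation φ₁ ↣ φ₂. -/
def Succ (φ₁ φ₂ : Descr) : Prop :=
  dom φ₁ = dom φ₂ ∧
  (∀ x m₁ m₂, φ₁ x = some m₁ → φ₂ x = some m₂ →
    m₁.keep = m₂.keep ∧ m₁.depends = m₂.depends ∧ m₁.conflicts = m₂.conflicts ∧
    m₁.provides = m₂.provides ∧ m₁.cost = m₂.cost) ∧
  (∀ p n m, φ₁ (p, n) = some m → m.installed = true →
    (m.keep = KeepVal.version → n ∈ inst φ₂ p) ∧
    (m.keep = KeepVal.package → (inst φ₂ p).Nonempty) ∧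
    (m.keep = KeepVal.feature → satList (merge (inst φ₂) (feat φ₂)) m.provides))

/-- Successor with the Keep-constraints ignored: same domain, differing only in Installed flags. -/
def SimpleSucc (φ₁ φ₂ : Descr) : Prop :=
  dom φ₁ = dom φ₂ ∧
  ∀ x m₁ m₂, φ₁ x = some m₁ → φ₂ x = some m₂ →
    m₁.keep = m₂.keep ∧ m₁.depends = m₂.depends ∧ m₁.conflicts = m₂.conflicts ∧
    m₁.provides = m₂.provides ∧ m₁.cost = m₂.cost

structure Request where
  li : List Atom
  lu : List Atom
  ld : List Atom

/-- The request semantics φ₁ ⟦r⟧ φ₂. -/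
def reqSem (r : Request) (φ₁ φ₂ : Descr) : Prop :=
  Succ φ₁ φ₂ ∧ consistent φ₂ ∧
  satList (merge (inst φ₂) (feat φ₂)) r.li ∧
  disj (merge (inst φ₂) (feat φ₂)) r.ld ∧
  satList (merge (inst φ₂) (feat φ₂)) r.lu ∧
  (∀ a ∈ r.lu, ∃ n, inst φ₂ a.2 = {n} ∧ ∀ n' ∈ inst φ₁ a.2, n' ≤ n)

/-- cost(φ): sum of the Cost values of all installed (name, version) pairs. -/
noncomputable def cost (φ : Descr) : ℤ :=
  ∑ᶠ x : PkgName × Ver, (φ x).elim 0 (fun m => if m.installed then m.cost else 0)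

/-- A consistent, installed package with an unversioned self-conflict is the only
    installed version of its name, provided no other installed package provides feature p. -/
theorem stmt13 (φ : Descr) (p : PkgName) (n : Ver) (m : Meta)
    (hc : consistent φ) (hm : φ (p, n) = some m) (hi : m.installed = true)
    (hconf : (VConstr.top, p) ∈ m.conflicts)
    (hfeat : feat (remove φ (p, n)) p = ∅) :
    inst φ p = {n} := by
  have hd := (hc p n m hm hi).2
  have key := hd (VConstr.top, p) hconf
  ext v
  simp only [Set.mem_singleton_iff]
  constructor
  · rintro ⟨m', hm', hi'⟩
    by_contra hne
    exact key v (Or.inl ⟨m', by simpa [remove, Prod.ext_iff, hne] using hm', hi'⟩) trivial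
  · rintro rfl
    exact ⟨m, hm, hi⟩
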